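/- arXiv:2103.00034 — 5 statements merged into one kernel-verified Lean document; each statement's English description precedes it below -/
import Mathlib

section
/- (Adversarial perturbation suffices.) Let θ, θ' be objective vectors for uniform metric labeling on graph G = (V,E) with the same node costs c and edge weights w, w' respectively, where w(u,v)/2 ≤ w'(u,v) ≤ w(u,v) for every edge. Let x̄ be a labeling and define w_adv(u,v) = w(u,v)/2 if x̄(u) = x̄(v), and w(u,v) otherwise. Then for any labeling x, ⟨θ', x⟩ - ⟨θ', x̄⟩ ≥ ⟨θ_adv, x⟩ - ⟨θ_adv, x̄⟩, where ⟨θ, x⟩ = ∑_u c(u, x(u)) + ∑_{(u,v)∈E, x(u)≠x(v)} w(u,v) and θ_adv uses weights w_adv. -/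
/-- Objective of a labeling `x` under node costs `c` and edge weights `W`:
`∑_u c(u, x(u)) + ∑_{(u,v) ∈ E, x(u) ≠ x(v)} W(u,v)`. -/
def labelingObj {V : Type*} [Fintype V] [DecidableEq V] (k : ℕ)
    (E : Finset (V × V)) (c : V → Fin k → ℝ) (W : V × V → ℝ) (x : V → Fin k) : ℝ :=
  (∑ u, c u (x u)) + ∑ e ∈ E.filter (fun e => x e.1 ≠ x e.2), W e

theorem adversarial_perturbation_suffices {V : Type*} [Fintype V] [DecidableEq V]
    (k : ℕ) (E : Finset (V × V)) (c : V → Fin k → ℝ) (w w' : V × V → ℝ)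
    (hw : ∀ e ∈ E, w e / 2 ≤ w' e ∧ w' e ≤ w e)
    (xbar : V → Fin k)
    (wadv : V × V → ℝ)
    (hwadv : ∀ e : V × V, wadv e = if xbar e.1 = xbar e.2 then w e / 2 else w e)
    (x : V → Fin k) :
    labelingObj k E c w' x - labelingObj k E c w' xbar
      ≥ labelingObj k E c wadv x - labelingObj k E c wadv xbar := by
  unfold labelingObj
  have h : ∀ (S : V × V → ℝ) (y : V → Fin k),
      ∑ e ∈ E.filter (fun e => y e.1 ≠ y e.2), S e
        = ∑ e ∈ E, if y e.1 ≠ y e.2 then S e else 0 := by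
    intro S y; rw [Finset.sum_filter]
  rw [h w' x, h w' xbar, h wadv x, h wadv xbar]
  have key : ∑ e ∈ E, ((if x e.1 ≠ x e.2 then wadv e else 0)
        - (if xbar e.1 ≠ xbar e.2 then wadv e else 0))
      ≤ ∑ e ∈ E, ((if x e.1 ≠ x e.2 then w' e else 0)
        - (if xbar e.1 ≠ xbar e.2 then w' e else 0)) := by
    apply Finset.sum_le_sum
    intro e he
    obtain ⟨h1, h2⟩ := hw e he
    rw [hwadv]
    by_cases hx : x e.1 = x e.2 <;> by_cases hb : xbar e.1 = xbar e.2 <;>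
      simp [hx, hb] <;> linarith
  rw [Finset.sum_sub_distrib, Finset.sum_sub_distrib] at key
  linarith
end

section
/- (ε-close rounding: node marginals.) Fix a probability vector x'_u on Fin k such that x'_u(i) ≤ ε < 1/k for all i ≠ x̄(u) (where x̄(u) is a fixed label). Choose i uniformly from [k] and r uniformly from (0, 1/k), independently; output h(u) = i if x'_u(i) > r, and h(u) = x̄(u) otherwise. Then P(h(u) = i) = x'_u(i) for every label i. -/
open MeasureTheory

theorem rounding_node_marginal (k : ℕ) [NeZero k] (xbaru : Fin k)
    (x' : Fin k → ℝ) (ε : ℝ)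
    (hx : ∀ i, 0 ≤ x' i) (hxs : ∑ i, x' i = 1)
    (hoff : ∀ j, j ≠ xbaru → x' j ≤ ε) (hε : ε < 1 / k) :
    ∀ j : Fin k,
      ((PMF.uniformOfFintype (Fin k)).toMeasure.prod
          ((k : ENNReal) • volume.restrict (Set.Ioo (0 : ℝ) (1 / k))))
        {p : Fin k × ℝ | (if x' p.1 > p.2 then p.1 else xbaru) = j}
        = ENNReal.ofReal (x' j) := by
  intro j
  have hk0 : (k : ℝ) ≠ 0 := Nat.cast_ne_zero.mpr (NeZero.ne k)
  have hkpos : (0 : ℝ) < k := by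
    have := Nat.pos_of_ne_zero (NeZero.ne k); exact_mod_cast this
  set b : ℝ := 1 / k with hbdef
  have hb : 0 < b := by positivity
  have hkb : (k : ℝ) * b = 1 := mul_one_div_cancel hk0
  have hoff' : ∀ i : Fin k, i ≠ xbaru → x' i < b := fun i hi =>
    lt_of_le_of_lt (hoff i hi) hε
  set ν : Measure ℝ := (k : ENNReal) • volume.restrict (Set.Ioo (0 : ℝ) b) with hν
  set T : Fin k → Set ℝ := fun i => {r | (if x' i > r then i else xbaru) = j} with hT
  -- descriptions of the slices
  have hTdesc : ∀ i : Fin k,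
      T i = (Set.Iio (x' i) ∩ (if i = j then Set.univ else ∅)) ∪
        ((Set.Iio (x' i))ᶜ ∩ (if xbaru = j then Set.univ else ∅)) := by
    intro i
    ext r
    by_cases h1 : r < x' i <;> by_cases h2 : i = j <;> by_cases h3 : xbaru = j <;>
      simp [hT, h1, h2, h3, not_lt, le_of_not_gt]
  have hTmeas : ∀ i, MeasurableSet (T i) := by
    intro i
    rw [hTdesc i]
    split_ifs <;>
      exact MeasurableSet.union (measurableSet_Iio.inter (by measurability))
        (measurableSet_Iio.compl.inter (by measurability))
  have hs : MeasurableSet {p : Fin k × ℝ | (if x' p.1 > p.2 then p.1 else xbaru) = j} := by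
    have hset : {p : Fin k × ℝ | (if x' p.1 > p.2 then p.1 else xbaru) = j}
        = ⋃ i, {i} ×ˢ T i := by
      ext ⟨i, r⟩
      simp [hT]
    rw [hset]
    exact MeasurableSet.iUnion fun i => (measurableSet_singleton i).prod (hTmeas i)
  haveI : IsFiniteMeasure ν := by
    constructor
    rw [hν, Measure.smul_apply, smul_eq_mul, Measure.restrict_apply MeasurableSet.univ,
      Set.univ_inter, Real.volume_Ioo]
    exact ENNReal.mul_lt_top (by simp) (by simp)
  -- compute ν on measurable sets
  have hνapp : ∀ A : Set ℝ, MeasurableSet A → ν A = (k : ENNReal) * volume (A ∩ Set.Ioo 0 b) := by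
    intro A hA
    rw [hν, Measure.smul_apply, smul_eq_mul, Measure.restrict_apply hA]
  have hcancel : ∀ x : ENNReal, ((k : ENNReal) * x) * (k : ENNReal)⁻¹ = x := by
    intro x
    rw [mul_comm, ← mul_assoc, ENNReal.inv_mul_cancel (by exact_mod_cast NeZero.ne k)
      (by simp), one_mul]
  rw [Measure.prod_apply hs, lintegral_fintype]
  have hμsingle : ∀ i : Fin k,
      (PMF.uniformOfFintype (Fin k)).toMeasure {i} = (k : ENNReal)⁻¹ := by
    intro i
    rw [PMF.toMeasure_apply_singleton _ _ (measurableSet_singleton i),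
      PMF.uniformOfFintype_apply]
    simp
  have hpre : ∀ i : Fin k,
      (Prod.mk i ⁻¹' {p : Fin k × ℝ | (if x' p.1 > p.2 then p.1 else xbaru) = j}) = T i :=
    fun i => rfl
  simp only [hpre, hμsingle]
  -- now the sum over Fin k
  by_cases hj : j = xbaru
  · -- j = xbaru
    subst hj
    have hfval : ∀ i : Fin k, ν (T i) * (k : ENNReal)⁻¹ =
        if i = j then ENNReal.ofReal b else ENNReal.ofReal (b - x' i) := by
      intro i
      by_cases hi : i = j
      · subst hi
        have : T i = Set.univ := by
          ext r; by_cases h1 : r < x' i <;> simp [hT, h1]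
        rw [this, hνapp _ MeasurableSet.univ, Set.univ_inter, Real.volume_Ioo, sub_zero,
          hcancel]
        simp
      · have hTi : T i = Set.Ici (x' i) := by
          ext r; by_cases h1 : r < x' i <;> simp [hT, h1, hi, not_lt, le_of_not_gt]
        have hvol : volume (Set.Ici (x' i) ∩ Set.Ioo 0 b) = ENNReal.ofReal (b - x' i) := by
          apply le_antisymm
          · rw [← Real.volume_Ico (a := x' i) (b := b)]
            exact measure_mono fun r hr => ⟨hr.1, hr.2.2⟩
          · rw [← Real.volume_Ioo (a := x' i) (b := b)]
            exact measure_mono fun r hr => ⟨le_of_lt hr.1, lt_of_le_of_lt (hx i) hr.1, hr.2⟩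
        rw [hTi, hνapp _ measurableSet_Ici, hvol, hcancel]
        simp [hi]
    rw [Finset.sum_congr rfl fun i _ => hfval i,
      Finset.sum_eq_sum_sdiff_singleton_add (Finset.mem_univ j)]
    have h1 : ∀ i ∈ Finset.univ \ {j},
        (if i = j then ENNReal.ofReal b else ENNReal.ofReal (b - x' i)) =
          ENNReal.ofReal (b - x' i) := by
      intro i hi
      simp only [Finset.mem_sdiff, Finset.mem_singleton] at hi
      simp [hi.2]
    rw [Finset.sum_congr rfl h1, if_pos rfl,
      ← ENNReal.ofReal_sum_of_nonneg (fun i hi => by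
        simp only [Finset.mem_sdiff, Finset.mem_singleton] at hi
        linarith [hoff' i hi.2]),
      ← ENNReal.ofReal_add (Finset.sum_nonneg fun i hi => by
        simp only [Finset.mem_sdiff, Finset.mem_singleton] at hi
        linarith [hoff' i hi.2]) hb.le]
    congr 1
    have hsum : ∑ i ∈ Finset.univ \ {j}, x' i = 1 - x' j := by
      have := Finset.sum_eq_sum_sdiff_singleton_add (Finset.mem_univ j) x'
      rw [hxs] at this
      linarith
    have hcard : (Finset.univ \ {j} : Finset (Fin k)).card = k - 1 := by
      rw [Finset.card_sdiff_of_subset (Finset.subset_univ _), Finset.card_singleton, Finset.card_univ,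
        Fintype.card_fin]
    have : ∑ i ∈ Finset.univ \ {j}, (b - x' i) = (k - 1) * b - (1 - x' j) := by
      rw [Finset.sum_sub_distrib, Finset.sum_const, hcard, hsum, nsmul_eq_mul]
      have hk1 : (1 : ℕ) ≤ k := Nat.one_le_iff_ne_zero.mpr (NeZero.ne k)
      push_cast [hk1]
      ring
    rw [this]
    linarith
  · -- j ≠ xbaru
    have hfval : ∀ i : Fin k, ν (T i) * (k : ENNReal)⁻¹ =
        if i = j then ENNReal.ofReal (x' j) else 0 := by
      intro i
      by_cases hi : i = j
      · subst hi
        have hTi : T i = Set.Iio (x' i) := by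
          ext r; by_cases h1 : r < x' i <;> simp [hT, h1, hj, Ne.symm hj]
        have hvol : Set.Iio (x' i) ∩ Set.Ioo 0 b = Set.Ioo 0 (x' i) := by
          ext r
          constructor
          · rintro ⟨h1, h2, _⟩; exact ⟨h2, h1⟩
          · rintro ⟨h1, h2⟩
            exact ⟨h2, h1, lt_trans h2 (hoff' i (fun h => hj (h ▸ rfl)))⟩
        rw [hTi, hνapp _ measurableSet_Iio, hvol, Real.volume_Ioo, sub_zero, hcancel,
          if_pos rfl]
      · have hTi : T i = ∅ := by
          ext r; by_cases h1 : r < x' i <;> simp [hT, h1, hi, hj, Ne.symm hj]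
        rw [hTi, hνapp _ MeasurableSet.empty, Set.empty_inter, measure_empty, mul_zero,
          zero_mul, if_neg hi]
    rw [Finset.sum_congr rfl fun i _ => hfval i, Finset.sum_ite_eq' Finset.univ j]
    simp
end

section
/- (ε-close rounding: uncut edge guarantee.) With the same rounding as above applied with shared randomness (i, r) at two vertices u, v with x̄(u) = x̄(v), and both x'_u, x'_v probability vectors with off-x̄ entries less than 1/k: P(h(u) ≠ h(v)) = ∑_{i ≠ x̄(u)} |x'_u(i) - x'_v(i)| ≤ 2 · d(u,v), where d(u,v) = (1/2) ∑_i |x'_u(i) - x'_v(i)|. -/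
open MeasureTheory

theorem rounding_uncut_edge (k : ℕ) [NeZero k] (xbaru : Fin k)
    (x'u x'v : Fin k → ℝ)
    (hxu : ∀ i, 0 ≤ x'u i) (hxus : ∑ i, x'u i = 1)
    (hxv : ∀ i, 0 ≤ x'v i) (hxvs : ∑ i, x'v i = 1)
    (hoffu : ∀ j, j ≠ xbaru → x'u j < 1 / k)
    (hoffv : ∀ j, j ≠ xbaru → x'v j < 1 / k) :
    ((PMF.uniformOfFintype (Fin k)).toMeasure.prod
        ((k : ENNReal) • volume.restrict (Set.Ioo (0 : ℝ) (1 / k))))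
      {p : Fin k × ℝ |
        (if x'u p.1 > p.2 then p.1 else xbaru) ≠ (if x'v p.1 > p.2 then p.1 else xbaru)}
      = ENNReal.ofReal (∑ i ∈ Finset.univ.erase xbaru, |x'u i - x'v i|)
    ∧ (∑ i ∈ Finset.univ.erase xbaru, |x'u i - x'v i|)
        ≤ 2 * ((1 / 2) * ∑ i, |x'u i - x'v i|) := by
  set ν : Measure ℝ := (k : ENNReal) • volume.restrict (Set.Ioo (0 : ℝ) (1 / k)) with hν
  set T : Fin k → Set ℝ := fun i =>
    {r : ℝ | (if x'u i > r then i else xbaru) ≠ (if x'v i > r then i else xbaru)} with hT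
  have hTeq : ∀ i, i ≠ xbaru →
      T i = Set.Ico (min (x'u i) (x'v i)) (max (x'u i) (x'v i)) := by
    intro i hi
    ext r
    constructor
    · intro h
      simp only [hT, Set.mem_setOf_eq] at h
      rcases lt_or_ge r (x'u i) with h1 | h1 <;> rcases lt_or_ge r (x'v i) with h2 | h2
      · simp [h1, h2] at h
      · exact ⟨(min_le_right _ _).trans h2, h1.trans_le (le_max_left _ _)⟩
      · exact ⟨(min_le_left _ _).trans h1, h2.trans_le (le_max_right _ _)⟩
      · simp [not_lt.2 h1, not_lt.2 h2] at h
    · rintro ⟨hm, hM⟩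
      simp only [hT, Set.mem_setOf_eq]
      rcases lt_or_ge r (x'u i) with h1 | h1 <;> rcases lt_or_ge r (x'v i) with h2 | h2
      · exact absurd hm (not_le.2 (lt_min h1 h2))
      · simp [h1, not_lt.2 h2, hi]
      · simp [not_lt.2 h1, h2, Ne.symm hi]
      · exact absurd hM (not_lt.2 (max_le h1 h2))
  have hTbar : T xbaru = ∅ := by
    ext r; simp [hT]
  have hTmeas : ∀ i, MeasurableSet (T i) := by
    intro i
    by_cases h : i = xbaru
    · rw [h, hTbar]; exact MeasurableSet.empty
    · rw [hTeq i h]; exact measurableSet_Ico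
  have hSeq : {p : Fin k × ℝ |
        (if x'u p.1 > p.2 then p.1 else xbaru) ≠ (if x'v p.1 > p.2 then p.1 else xbaru)}
      = ⋃ i, ({i} : Set (Fin k)) ×ˢ T i := by
    ext ⟨i, r⟩
    simp only [Set.mem_iUnion, Set.mem_prod, Set.mem_singleton_iff, hT, Set.mem_setOf_eq]
    exact ⟨fun h => ⟨i, rfl, h⟩, fun ⟨j, hj, h⟩ => by subst hj; exact h⟩
  have hSmeas : MeasurableSet {p : Fin k × ℝ |
        (if x'u p.1 > p.2 then p.1 else xbaru) ≠ (if x'v p.1 > p.2 then p.1 else xbaru)} := by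
    rw [hSeq]
    exact MeasurableSet.iUnion fun i => (measurableSet_singleton i).prod (hTmeas i)
  have hνT : ∀ i, i ≠ xbaru → ν (T i) = (k : ENNReal) * ENNReal.ofReal (|x'u i - x'v i|) := by
    intro i hi
    have h0 : (0:ℝ) ≤ min (x'u i) (x'v i) := le_min (hxu i) (hxv i)
    have h1 : max (x'u i) (x'v i) < 1 / k := max_lt (hoffu i hi) (hoffv i hi)
    have hvol : volume (Set.Ico (min (x'u i) (x'v i)) (max (x'u i) (x'v i)) ∩
        Set.Ioo (0:ℝ) (1 / k)) = ENNReal.ofReal (max (x'u i) (x'v i) - min (x'u i) (x'v i)) := by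
      apply le_antisymm
      · calc _ ≤ volume (Set.Ico (min (x'u i) (x'v i)) (max (x'u i) (x'v i))) :=
            measure_mono Set.inter_subset_left
          _ = _ := Real.volume_Ico
      · refine le_of_eq_of_le Real.volume_Ioo.symm (measure_mono ?_)
        intro r hr
        exact ⟨⟨hr.1.le, hr.2⟩, h0.trans_lt hr.1, hr.2.trans h1⟩
    rw [hTeq i hi, hν, Measure.smul_apply, smul_eq_mul,
      Measure.restrict_apply measurableSet_Ico, hvol, max_sub_min_eq_abs, abs_sub_comm]
  have hprod := Measure.prod_apply (μ := (PMF.uniformOfFintype (Fin k)).toMeasure)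
      (ν := ν) hSmeas
  rw [hprod]
  constructor
  · have hsec : ∀ i : Fin k, (Prod.mk i ⁻¹' {p : Fin k × ℝ |
        (if x'u p.1 > p.2 then p.1 else xbaru) ≠ (if x'v p.1 > p.2 then p.1 else xbaru)}) = T i :=
      fun i => rfl
    have : ∫⁻ i, ν (Prod.mk i ⁻¹' {p : Fin k × ℝ |
        (if x'u p.1 > p.2 then p.1 else xbaru) ≠ (if x'v p.1 > p.2 then p.1 else xbaru)})
        ∂(PMF.uniformOfFintype (Fin k)).toMeasure = ∑ i, ν (T i) *
          (PMF.uniformOfFintype (Fin k)).toMeasure {i} := by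
      simp_rw [hsec]
      exact lintegral_fintype _
    rw [this]
    have hμs : ∀ i : Fin k, (PMF.uniformOfFintype (Fin k)).toMeasure {i} = (k : ENNReal)⁻¹ := by
      intro i
      rw [PMF.toMeasure_apply_singleton _ _ (measurableSet_singleton i),
        PMF.uniformOfFintype_apply]
      simp
    have hk0 : (k : ENNReal) ≠ 0 := by exact_mod_cast (NeZero.ne k)
    have hktop : (k : ENNReal) ≠ ⊤ := ENNReal.natCast_ne_top k
    calc ∑ i, ν (T i) * (PMF.uniformOfFintype (Fin k)).toMeasure {i}
        = ∑ i ∈ Finset.univ.erase xbaru, ν (T i) * (k : ENNReal)⁻¹ := by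
          rw [Finset.sum_erase _ (by rw [hTbar]; simp)]
          simp_rw [hμs]
      _ = ∑ i ∈ Finset.univ.erase xbaru, ENNReal.ofReal (|x'u i - x'v i|) := by
          apply Finset.sum_congr rfl
          intro i hi
          rw [hνT i (Finset.ne_of_mem_erase hi), mul_comm (k : ENNReal), mul_assoc,
            ENNReal.mul_inv_cancel hk0 hktop, mul_one]
      _ = ENNReal.ofReal (∑ i ∈ Finset.univ.erase xbaru, |x'u i - x'v i|) :=
          (ENNReal.ofReal_sum_of_nonneg (fun i _ => abs_nonneg _)).symm
  · have : 2 * ((1 / 2) * ∑ i, |x'u i - x'v i|) = ∑ i, |x'u i - x'v i| := by ring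
    rw [this]
    exact Finset.sum_le_sum_of_subset_of_nonneg (Finset.erase_subset _ _)
      (fun i _ _ => abs_nonneg _)
end

section
/- (ε-close rounding: cut edge guarantee.) With the same shared-randomness rounding at vertices u, v with x̄(u) ≠ x̄(v): P(h(u) = h(v)) = (1/k)·∑_i min(x'_u(i), x'_v(i))/(1/k) = 1 - d(u,v), where d(u,v) = (1/2)∑_i |x'_u(i) - x'_v(i)|. -/
open MeasureTheory

theorem rounding_cut_edge (k : ℕ) [NeZero k] (xbaru xbarv : Fin k)
    (hne : xbaru ≠ xbarv) (x'u x'v : Fin k → ℝ)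
    (hxu : ∀ i, 0 ≤ x'u i) (hxus : ∑ i, x'u i = 1)
    (hxv : ∀ i, 0 ≤ x'v i) (hxvs : ∑ i, x'v i = 1)
    (hoffu : ∀ j, j ≠ xbaru → x'u j < 1 / k)
    (hoffv : ∀ j, j ≠ xbarv → x'v j < 1 / k) :
    ((PMF.uniformOfFintype (Fin k)).toMeasure.prod
        ((k : ENNReal) • volume.restrict (Set.Ioo (0 : ℝ) (1 / k))))
      {p : Fin k × ℝ |
        (if x'u p.1 > p.2 then p.1 else xbaru) = (if x'v p.1 > p.2 then p.1 else xbarv)}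
      = ENNReal.ofReal (1 - (1 / 2) * ∑ i, |x'u i - x'v i|) := by
  have hk0 : (k : ℝ) ≠ 0 := Nat.cast_ne_zero.mpr (NeZero.ne k)
  have hk : (0:ℝ) < k := Nat.cast_pos.mpr (Nat.pos_of_ne_zero (NeZero.ne k))
  set c : Fin k → ℝ := fun i => min (x'u i) (x'v i) with hc
  -- lower bound on the diagonal coordinates
  have key : ∀ (x : Fin k → ℝ) (a : Fin k), (∀ i, 0 ≤ x i) → (∑ i, x i = 1) →
      (∀ j, j ≠ a → x j < 1 / k) → (1:ℝ)/k ≤ x a := by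
    intro x a hx hxs hoff
    have hsum : ∑ j ∈ Finset.univ.erase a, x j ≤ ((k-1 : ℕ) : ℝ) * (1/k) := by
      have := Finset.sum_le_card_nsmul (Finset.univ.erase a) x (1/k)
        (fun j hj => le_of_lt (hoff j (Finset.ne_of_mem_erase hj)))
      simpa [Finset.card_erase_of_mem, Finset.card_univ, nsmul_eq_mul] using this
    have hcast : ((k-1 : ℕ) : ℝ) = (k:ℝ) - 1 := by
      have : 1 ≤ k := Nat.one_le_iff_ne_zero.mpr (NeZero.ne k)
      push_cast [Nat.cast_sub this]; ring
    have hsplit : x a + ∑ j ∈ Finset.univ.erase a, x j = 1 := by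
      rw [Finset.add_sum_erase _ _ (Finset.mem_univ a)]; exact hxs
    have h1 : ((k:ℝ) - 1) * (1/k) = 1 - 1/k := by field_simp
    rw [hcast, h1] at hsum
    linarith
  have hku : (1:ℝ)/k ≤ x'u xbaru := key x'u xbaru hxu hxus hoffu
  have hkv : (1:ℝ)/k ≤ x'v xbarv := key x'v xbarv hxv hxvs hoffv
  have hcu : c xbaru = x'v xbaru := min_eq_right (le_of_lt (lt_of_lt_of_le (hoffv _ hne) hku))
  have hcv : c xbarv = x'u xbarv := min_eq_left (le_of_lt (lt_of_lt_of_le (hoffu _ (Ne.symm hne)) hkv))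
  have hc0 : ∀ i, 0 ≤ c i := fun i => le_min (hxu i) (hxv i)
  have hclt : ∀ i, c i < 1/k := by
    intro i
    by_cases hiu : i = xbaru
    · subst hiu; rw [hcu]; exact hoffv _ hne
    · exact lt_of_le_of_lt (min_le_left _ _) (hoffu i hiu)
  -- the set as a union of product slices
  have hset : {p : Fin k × ℝ |
      (if x'u p.1 > p.2 then p.1 else xbaru) = (if x'v p.1 > p.2 then p.1 else xbarv)}
      = ⋃ i, ({i} : Set (Fin k)) ×ˢ Set.Iio (c i) := by
    ext ⟨i, r⟩
    simp only [Set.mem_setOf_eq, Set.mem_iUnion, Set.mem_prod, Set.mem_singleton_iff,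
      Set.mem_Iio]
    constructor
    · intro h
      refine ⟨i, rfl, ?_⟩
      by_cases hiu : i = xbaru
      · subst hiu
        rw [hcu]
        split_ifs at h with h1 h2 h2
        · exact h2
        · exact absurd h hne
        · exact h2
        · exact absurd h hne
      · by_cases hiv : i = xbarv
        · subst hiv
          rw [hcv]
          split_ifs at h with h1 h2 h2
          · exact h1
          · exact h1
          · exact absurd h.symm hiu
          · exact absurd h.symm hiu
        · split_ifs at h with h1 h2 h2
          · exact lt_min h1 h2
          · exact absurd h hiv
          · exact absurd h.symm hiu
          · exact absurd h hne
    · rintro ⟨j, hj, hr⟩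
      subst hj
      by_cases hiu : i = xbaru
      · have h2 : x'v i > r := by rw [hiu] at hr ⊢; rw [hcu] at hr; exact hr
        rw [if_pos h2]
        by_cases h1 : x'u i > r
        · rw [if_pos h1]
        · rw [if_neg h1]; exact hiu.symm
      · by_cases hiv : i = xbarv
        · have h1 : x'u i > r := by rw [hiv] at hr ⊢; rw [hcv] at hr; exact hr
          rw [if_pos h1]
          by_cases h2 : x'v i > r
          · rw [if_pos h2]
          · rw [if_neg h2]; exact hiv
        · have h1 : x'u i > r := lt_of_lt_of_le hr (min_le_left _ _)
          have h2 : x'v i > r := lt_of_lt_of_le hr (min_le_right _ _)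
          simp [h1, h2]
  rw [hset]
  have hmeas : MeasurableSet (⋃ i, ({i} : Set (Fin k)) ×ˢ Set.Iio (c i)) :=
    MeasurableSet.iUnion fun i => (measurableSet_singleton i).prod measurableSet_Iio
  rw [Measure.prod_apply hmeas]
  have hpre : ∀ i : Fin k, Prod.mk i ⁻¹' (⋃ j, ({j} : Set (Fin k)) ×ˢ Set.Iio (c j))
      = Set.Iio (c i) := by
    intro i
    ext r
    simp only [Set.mem_preimage, Set.mem_iUnion, Set.mem_prod, Set.mem_singleton_iff,
      Set.mem_Iio]
    constructor
    · rintro ⟨j, rfl, h⟩; exact h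
    · intro h; exact ⟨i, rfl, h⟩
  have hnu : ∀ i : Fin k, ((k : ENNReal) • volume.restrict (Set.Ioo (0 : ℝ) (1 / k)))
      (Set.Iio (c i)) = (k : ENNReal) * ENNReal.ofReal (c i) := by
    intro i
    rw [Measure.smul_apply, smul_eq_mul, Measure.restrict_apply measurableSet_Iio]
    congr 1
    have : Set.Iio (c i) ∩ Set.Ioo (0:ℝ) (1/k) = Set.Ioo 0 (c i) := by
      ext x
      simp only [Set.mem_inter_iff, Set.mem_Iio, Set.mem_Ioo]
      constructor
      · rintro ⟨h1, h2, h3⟩; exact ⟨h2, h1⟩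
      · rintro ⟨h1, h2⟩; exact ⟨h2, h1, lt_trans h2 (hclt i)⟩
    rw [this, Real.volume_Ioo, sub_zero]
  simp only [hpre, hnu]
  rw [lintegral_fintype]
  have huni : ∀ i : Fin k, (PMF.uniformOfFintype (Fin k)).toMeasure {i} = (k : ENNReal)⁻¹ := by
    intro i
    rw [PMF.toMeasure_apply_singleton _ _ (measurableSet_singleton i),
      PMF.uniformOfFintype_apply]
    simp
  have hkne : (k : ENNReal) ≠ 0 := by
    simpa using (NeZero.ne k)
  have hktop : (k : ENNReal) ≠ ⊤ := ENNReal.natCast_ne_top k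
  have hterm : ∀ i : Fin k, (k : ENNReal) * ENNReal.ofReal (c i) *
      (PMF.uniformOfFintype (Fin k)).toMeasure {i} = ENNReal.ofReal (c i) := by
    intro i
    rw [huni i, mul_comm ((k:ENNReal)) (ENNReal.ofReal (c i)), mul_assoc,
      ENNReal.mul_inv_cancel hkne hktop, mul_one]
  simp only [hterm]
  rw [← ENNReal.ofReal_sum_of_nonneg (fun i _ => hc0 i)]
  congr 1
  have hmin : ∀ i : Fin k, c i = (x'u i + x'v i - |x'u i - x'v i|) / 2 := by
    intro i
    show min (x'u i) (x'v i) = (x'u i + x'v i - |x'u i - x'v i|) / 2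
    rcases le_total (x'u i) (x'v i) with h | h
    · rw [min_eq_left h, abs_of_nonpos (by linarith)]; ring
    · rw [min_eq_right h, abs_of_nonneg (by linarith)]; ring
  rw [Finset.sum_congr rfl (fun i _ => hmin i)]
  have : ∑ i, (x'u i + x'v i - |x'u i - x'v i|) = 2 - ∑ i, |x'u i - x'v i| := by
    rw [Finset.sum_sub_distrib, Finset.sum_add_distrib, hxus, hxvs]; ring
  rw [← Finset.sum_div, this]
  ring
end

section
/- (Expected Hamming distance of rounding.) Let x be a probability-vector assignment on vertices V, x̄ an integral labeling, ε ∈ (0, 1/k), and x' = ε x + (1-ε) x̄ (per-vertex convex combination). Under the ε-close rounding with shared randomness, the expected number of vertices where the rounded labeling h differs from x̄ satisfies E[∑_{u∈V} 1[h(u) ≠ x̄(u)]] = ε ∑_{u∈V} (1/2)‖x_u - x̄_u‖₁. -/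
/-!
Vertex `u` leaves its label `x̄ u` exactly when the shared label `i` differs from `x̄ u` and the
threshold `r` falls below `x' u i = ε * x u i`. Since `ε < 1 / k`, this weight lies inside the range
`(0, 1 / k)` of `r`, so the event has probability `∑_{i ≠ x̄ u} ε * x u i = ε * (1 - x u (x̄ u))`,
which is `ε` times half the `ℓ¹` distance from `x u` to the indicator of `x̄ u`. Linearity of
expectation sums this over the vertices.
-/

open MeasureTheory Finset
open scoped ENNReal

theorem integral_prod_uniformOfFintype {α β : Type*} [Fintype α] [Nonempty α]
    [MeasurableSpace α] [MeasurableSingletonClass α] [MeasurableSpace β]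
    {ν : Measure β} [SFinite ν] {f : α × β → ℝ}
    (hf : Integrable f ((PMF.uniformOfFintype α).toMeasure.prod ν)) :
    ∫ p, f p ∂(PMF.uniformOfFintype α).toMeasure.prod ν
      = (Fintype.card α : ℝ)⁻¹ * ∑ a, ∫ b, f (a, b) ∂ν := by
  rw [integral_prod f hf, PMF.integral_eq_sum, mul_sum]
  simp [PMF.uniformOfFintype_apply]

theorem sum_abs_sub_indicator {ι : Type*} [Fintype ι] [DecidableEq ι] {p : ι → ℝ}
    (hp0 : ∀ i, 0 ≤ p i) (hp1 : ∑ i, p i = 1) (j : ι) :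
    ∑ i, |p i - if i = j then 1 else 0| = 2 * (1 - p j) := by
  have hpj : p j ≤ 1 := hp1 ▸ single_le_sum (fun i _ => hp0 i) (mem_univ j)
  rw [← add_sum_erase _ _ (mem_univ j), sum_congr rfl fun i hi => by
    rw [if_neg (ne_of_mem_erase hi), sub_zero, abs_of_nonneg (hp0 i)],
    sum_erase_eq_sub (mem_univ j), hp1, if_pos rfl, abs_of_nonpos (by linarith)]
  ring

theorem measureReal_smul_restrict_Ioo_Iio {a b : ℝ} (c : ℝ≥0∞) (ha : 0 ≤ a) (hab : a ≤ b) :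
    (c • volume.restrict (Set.Ioo 0 b)).real (Set.Iio a) = c.toReal * a := by
  rw [measureReal_ennreal_smul_apply, measureReal_restrict_apply measurableSet_Iio,
    Set.Iio_inter_Ioo, min_eq_left hab, Real.volume_real_Ioo_of_le ha, sub_zero]

noncomputable def roundLabel {k : ℕ} (y : Fin k → ℝ) (j : Fin k) (p : Fin k × ℝ) : Fin k :=
  if y p.1 > p.2 then p.1 else j

noncomputable def roundingMeasure (k : ℕ) [NeZero k] : Measure (Fin k × ℝ) :=
  (PMF.uniformOfFintype (Fin k)).toMeasure.prod
    ((k : ℝ≥0∞) • volume.restrict (Set.Ioo (0 : ℝ) (1 / k)))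

instance (k : ℕ) [NeZero k] : IsFiniteMeasure (roundingMeasure k) :=
  have := (volume.restrict (Set.Ioo (0 : ℝ) (1 / k))).smul_finite (ENNReal.natCast_ne_top k)
  by unfold roundingMeasure; infer_instance

theorem roundLabel_ne_iff {k : ℕ} (y : Fin k → ℝ) (j : Fin k) (p : Fin k × ℝ) :
    roundLabel y j p ≠ j ↔ p.1 ≠ j ∧ p.2 < y p.1 := by
  unfold roundLabel
  split_ifs with h <;> simp_all

theorem measurableSet_roundLabel_ne {k : ℕ} (y : Fin k → ℝ) (j : Fin k) :
    MeasurableSet {p | roundLabel y j p ≠ j} := by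
  simp only [roundLabel_ne_iff]
  exact (measurable_fst (measurableSet_singleton j).compl).inter
    (measurableSet_lt measurable_snd ((measurable_of_finite y).comp measurable_fst))

theorem integrable_roundLabel_ne {k : ℕ} (y : Fin k → ℝ) (j : Fin k)
    (μ : Measure (Fin k × ℝ)) [IsFiniteMeasure μ] :
    Integrable (fun p => if roundLabel y j p ≠ j then (1 : ℝ) else 0) μ := by
  have : (fun p => if roundLabel y j p ≠ j then (1 : ℝ) else 0)
      = {p | roundLabel y j p ≠ j}.indicator 1 := by
    ext p
    simp only [Set.indicator_apply, Set.mem_ofPred_eq, Pi.one_apply]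
  rw [this]
  exact (integrable_const 1).indicator (measurableSet_roundLabel_ne y j)

theorem integral_roundLabel_ne {k : ℕ} [NeZero k] (y : Fin k → ℝ) (j : Fin k)
    (hy0 : ∀ i ≠ j, 0 ≤ y i) (hy1 : ∀ i ≠ j, y i ≤ 1 / k) :
    ∫ p, (if roundLabel y j p ≠ j then (1 : ℝ) else 0) ∂roundingMeasure k
      = ∑ i ∈ univ.erase j, y i := by
  have hsection : ∀ i, ∫ r, (if roundLabel y j (i, r) ≠ j then (1 : ℝ) else 0)
      ∂((k : ℝ≥0∞) • volume.restrict (Set.Ioo (0 : ℝ) (1 / k)))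
      = if i ≠ j then k * y i else 0 := by
    intro i
    split_ifs with hi
    · have : (fun r => if roundLabel y j (i, r) ≠ j then (1 : ℝ) else 0)
          = (Set.Iio (y i)).indicator 1 := by
        ext r; simp [Set.indicator_apply, roundLabel_ne_iff, hi]
      rw [this, integral_indicator_one measurableSet_Iio,
        measureReal_smul_restrict_Ioo_Iio _ (hy0 i hi) (hy1 i hi)]
      simp
    · simp [roundLabel_ne_iff, not_not.mp hi]
  have hk : (k : ℝ) ≠ 0 := Nat.cast_ne_zero.mpr (NeZero.ne k)
  have hint := integrable_roundLabel_ne y j (roundingMeasure k)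
  rw [roundingMeasure, integral_prod_uniformOfFintype hint, Fintype.card_fin]
  simp only [hsection, ← sum_filter, filter_ne', mul_sum, inv_mul_cancel_left₀ hk]

theorem rounding_expected_hamming {V : Type*} [Fintype V] (k : ℕ) [NeZero k]
    (x : V → Fin k → ℝ) (xbar : V → Fin k) (ε : ℝ)
    (hε0 : 0 < ε) (hε1 : ε < 1 / k)
    (hx : ∀ u i, 0 ≤ x u i) (hxs : ∀ u, ∑ i, x u i = 1)
    (x' : V → Fin k → ℝ)
    (hx' : ∀ u i, x' u i = ε * x u i + (1 - ε) * (if i = xbar u then 1 else 0)) :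
    ∫ p : Fin k × ℝ,
        (∑ u, if (if x' u p.1 > p.2 then p.1 else xbar u) ≠ xbar u then (1 : ℝ) else 0)
      ∂((PMF.uniformOfFintype (Fin k)).toMeasure.prod
          ((k : ENNReal) • volume.restrict (Set.Ioo (0 : ℝ) (1 / k))))
      = ε * ∑ u, (1 / 2) * ∑ i, |x u i - (if i = xbar u then (1 : ℝ) else 0)| := by
  have hx'_ne : ∀ u, ∀ i ≠ xbar u, x' u i = ε * x u i := fun u i hi => by simp [hx' u i, hi]
  have hvertex : ∀ u, ∫ p, (if roundLabel (x' u) (xbar u) p ≠ xbar u then (1 : ℝ) else 0)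
      ∂roundingMeasure k = ε * (1 - x u (xbar u)) := fun u => by
    have hxle : ∀ i, ε * x u i ≤ 1 / k := fun i =>
      (mul_le_of_le_one_right hε0.le
        (hxs u ▸ single_le_sum (fun j _ => hx u j) (mem_univ i))).trans hε1.le
    rw [integral_roundLabel_ne _ _ (fun i hi => hx'_ne u i hi ▸ mul_nonneg hε0.le (hx u i))
        (fun i hi => hx'_ne u i hi ▸ hxle i),
      sum_congr rfl fun i hi => hx'_ne u i (ne_of_mem_erase hi),
      ← mul_sum, sum_erase_eq_sub (mem_univ _), hxs u]
  change ∫ p, ∑ u, (if roundLabel (x' u) (xbar u) p ≠ xbar u then (1 : ℝ) else 0)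
    ∂roundingMeasure k = _
  rw [integral_finsetSum _ fun u _ => integrable_roundLabel_ne _ _ _, mul_sum]
  simp only [hvertex, sum_abs_sub_indicator (hx _) (hxs _)]
  exact sum_congr rfl fun u _ => by ring
end
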